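/- arXiv:2012.04483 — 2 statements merged into one kernel-verified Lean document; each statement's English description precedes it below -/
import Mathlib

section
/- For all integers m ≥ 2 and q ≥ 2, the array P of Construction 1 is an (mq, q^{m−1}, q^{m−2}, (q−1)q^{m−1}) placement delivery array. Moreover, every row of P contains exactly m stars, and for every row f and every δ ∈ {1,…,m}, among the q entries of row f in the columns (δ,1), (δ,2), …, (δ,q) there is exactly one star. -/
/-- `natMod1 b a` is the representative of `b` modulo `a` lying in `{1, …, a}`
(i.e. `Mod(b,a)` in the paper's notation). -/
def natMod1 (b a : ℕ) : ℕ := if b % a = 0 then a else b % a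

open Finset Function

/-!
The rows of `P` form a single parity-check code over `ℤ/q`: any `m - 1` coordinates of a row
determine the remaining one. Hence two rows that differ in exactly one coordinate do not exist,
which makes every non-star entry a label and gives (C3); a non-row becomes a row after
correcting its last coordinate, which gives (C2). Resetting one coordinate `i` to a fixed value
is a bijection from the rows onto the words with that value at `i`, so rows with prescribed
coordinates are counted like arbitrary words with one more prescribed coordinate.
-/

section UniqueCompletion

variable {ι α : Type*} [Fintype ι] [DecidableEq ι]

theorem update_mem_piFinset {t : Finset α} {f : ι → α} (hf : f ∈ Fintype.piFinset fun _ ↦ t)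
    (i : ι) {c : α} (hc : c ∈ t) : update f i c ∈ Fintype.piFinset fun _ ↦ t := by
  rw [Fintype.mem_piFinset] at hf ⊢
  intro j
  rcases eq_or_ne j i with rfl | hj
  · simpa
  · simpa [hj] using hf j

theorem card_filter_piFinset_const_eq_and_eq_of_mem [DecidableEq α] (t : Finset α) {i j : ι}
    (hij : i ≠ j) {a b : α} (ha : a ∈ t) (hb : b ∈ t) :
    #{g ∈ Fintype.piFinset (fun _ ↦ t) | g j = b ∧ g i = a} = #t ^ (Fintype.card ι - 2) := by
  rw [← filter_filter,
    ← Fintype.piFinset_update_singleton_eq_filter_piFinset_eq (fun _ : ι ↦ t) j hb]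
  have := Fintype.card_filter_piFinset_eq_of_mem (update (fun _ : ι ↦ t) j {b}) i (a := a)
    (by simpa [hij] using ha)
  rw [this]
  simp_rw [apply_update (fun _ ↦ Finset.card)]
  rw [prod_update_of_mem (by simpa using hij.symm)]
  simp [prod_const, card_sdiff, card_erase_of_mem, hij.symm, Nat.sub_sub]

/-- Equivalently: a code of minimum distance `2` and of the largest size allowed by it,
`#t ^ (card ι - 1)`. -/
structure IsUniquelyCompletable (t : Finset α) (C : Finset (ι → α)) : Prop where
  subset : C ⊆ Fintype.piFinset fun _ ↦ t
  existsUnique_update_mem :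
    ∀ f ∈ Fintype.piFinset (fun _ ↦ t), ∀ i, ∃! c, c ∈ t ∧ update f i c ∈ C

namespace IsUniquelyCompletable

variable {t : Finset α} {C : Finset (ι → α)}

theorem eq_of_forall_ne_eq (hC : IsUniquelyCompletable t C) {f g : ι → α} (hf : f ∈ C)
    (hg : g ∈ C) {i : ι} (h : ∀ j ≠ i, f j = g j) : f = g := by
  have hg' : update f i (g i) = g := by
    ext j
    rcases eq_or_ne j i with rfl | hj
    · simp
    · simp [hj, h j hj]
  have hfi : f i = g i :=
    (hC.existsUnique_update_mem f (hC.subset hf) i).unique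
      ⟨Fintype.mem_piFinset.1 (hC.subset hf) i, by simpa using hf⟩
      ⟨Fintype.mem_piFinset.1 (hC.subset hg) i, by rwa [hg']⟩
  rwa [← hfi, update_eq_self] at hg'

theorem update_notMem (hC : IsUniquelyCompletable t C) {f : ι → α} (hf : f ∈ C) {i : ι} {b : α}
    (hb : f i ≠ b) : update f i b ∉ C := fun h ↦
  hb (congrFun (hC.eq_of_forall_ne_eq hf h fun _ hj ↦ (update_of_ne hj b f).symm) i |>.trans
    (update_self i b f))

theorem card_filter_eq_card_filter_piFinset [DecidableEq α] (hC : IsUniquelyCompletable t C)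
    {p : (ι → α) → Prop} [DecidablePred p] {i : ι} {a : α} (ha : a ∈ t)
    (hp : ∀ f c, p (update f i c) ↔ p f) :
    #{f ∈ C | p f} = #{g ∈ Fintype.piFinset (fun _ ↦ t) | g i = a ∧ p g} := by
  refine card_nbij (update · i a) (fun f hf ↦ ?_) (fun f hf f' hf' h ↦ ?_) (fun g hg ↦ ?_)
  · rw [mem_coe, mem_filter] at hf ⊢
    exact ⟨update_mem_piFinset (hC.subset hf.1) i ha, update_self i a f, (hp f a).2 hf.2⟩
  · simp only [mem_coe, mem_filter] at hf hf'
    refine hC.eq_of_forall_ne_eq hf.1 hf'.1 (i := i) fun j hj ↦ ?_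
    simpa [hj] using congrFun h j
  · simp only [mem_coe, mem_filter] at hg
    obtain ⟨c, ⟨-, hc⟩, -⟩ := hC.existsUnique_update_mem g hg.1 i
    refine ⟨update g i c, by simpa [hc] using (hp g c).2 hg.2.2, ?_⟩
    simp [← hg.2.1]

theorem card [Nonempty ι] [DecidableEq α] (hC : IsUniquelyCompletable t C) {a : α}
    (ha : a ∈ t) : #C = #t ^ (Fintype.card ι - 1) := by
  simpa [Fintype.card_filter_piFinset_const_eq_of_mem _ _ ha] using
    hC.card_filter_eq_card_filter_piFinset (p := fun _ ↦ True) (i := Classical.arbitrary ι) ha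
      fun _ _ ↦ Iff.rfl

theorem card_filter_apply_eq [DecidableEq α] (hC : IsUniquelyCompletable t C)
    (hι : 2 ≤ Fintype.card ι) (δ : ι) {b : α} (hb : b ∈ t) :
    #{f ∈ C | f δ = b} = #t ^ (Fintype.card ι - 2) := by
  obtain ⟨i, hi⟩ := Fintype.exists_ne_of_one_lt_card hι δ
  rw [hC.card_filter_eq_card_filter_piFinset hb (i := i) fun f c ↦ by rw [update_of_ne hi.symm],
    card_filter_piFinset_const_eq_and_eq_of_mem t hi.symm hb hb]

end IsUniquelyCompletable

end UniqueCompletion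

section UpdateArray

variable {ι α : Type*} [DecidableEq ι] [DecidableEq α]

/-- The array of Construction 1 built on an arbitrary code; `none` plays the role of `*`. -/
def updateArray (f : ι → α) (δ : ι) (b : α) : Option (ι → α) :=
  if f δ = b then none else some (update f δ b)

@[simp]
theorem updateArray_eq_none_iff {f : ι → α} {δ : ι} {b : α} :
    updateArray f δ b = none ↔ f δ = b := by
  unfold updateArray; split_ifs <;> simpa

theorem updateArray_eq_some_iff {f e : ι → α} {δ : ι} {b : α} :
    updateArray f δ b = some e ↔ f δ ≠ b ∧ update f δ b = e := by
  unfold updateArray; split_ifs <;> simp [*]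

theorem card_filter_updateArray_apply_eq_none {t : Finset α} {f : ι → α} {δ : ι} (hf : f δ ∈ t) :
    #{b ∈ t | updateArray f δ b = none} = 1 := by
  simp [filter_eq, hf]

variable [Fintype ι]

theorem card_filter_updateArray_eq_none {t : Finset α} {f : ι → α} (hf : ∀ i, f i ∈ t) :
    #{p ∈ (univ : Finset ι) ×ˢ t | updateArray f p.1 p.2 = none} = Fintype.card ι := by
  rw [card_filter, sum_product]
  simp [hf]

namespace IsUniquelyCompletable

variable {t : Finset α} {C : Finset (ι → α)}

theorem updateArray_mem_sdiff (hC : IsUniquelyCompletable t C) {f e : ι → α} (hf : f ∈ C)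
    {δ : ι} {b : α} (hb : b ∈ t) (he : updateArray f δ b = some e) :
    e ∈ Fintype.piFinset (fun _ ↦ t) \ C := by
  obtain ⟨hfb, rfl⟩ := updateArray_eq_some_iff.1 he
  exact mem_sdiff.2 ⟨update_mem_piFinset (hC.subset hf) δ hb, hC.update_notMem hf hfb⟩

theorem exists_updateArray_eq_some [Nonempty ι] (hC : IsUniquelyCompletable t C) {e : ι → α}
    (he : e ∈ Fintype.piFinset (fun _ ↦ t) \ C) :
    ∃ f, f ∈ C ∧ ∃ δ, ∃ b ∈ t, updateArray f δ b = some e := by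
  obtain ⟨he, heC⟩ := mem_sdiff.1 he
  let δ := Classical.arbitrary ι
  obtain ⟨c, ⟨-, hc⟩, -⟩ := hC.existsUnique_update_mem e he δ
  refine ⟨update e δ c, hc, δ, e δ, Fintype.mem_piFinset.1 he δ,
    updateArray_eq_some_iff.2 ⟨?_, ?_⟩⟩
  · rw [update_self]
    rintro rfl
    exact heC (by simpa using hc)
  · simp

theorem updateArray_cross_eq_none (hC : IsUniquelyCompletable t C) {f₁ f₂ : ι → α} (h₁ : f₁ ∈ C)
    (h₂ : f₂ ∈ C) {δ₁ δ₂ : ι} {b₁ b₂ : α} (hne : (f₁, δ₁, b₁) ≠ (f₂, δ₂, b₂))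
    (heq : updateArray f₁ δ₁ b₁ = updateArray f₂ δ₂ b₂) (hstar : updateArray f₁ δ₁ b₁ ≠ none) :
    f₁ ≠ f₂ ∧ (δ₁, b₁) ≠ (δ₂, b₂) ∧ updateArray f₁ δ₂ b₂ = none ∧
      updateArray f₂ δ₁ b₁ = none := by
  obtain ⟨e, he⟩ := Option.ne_none_iff_exists'.1 hstar
  obtain ⟨hb₁, rfl⟩ := updateArray_eq_some_iff.1 he
  obtain ⟨hb₂, hupd⟩ := updateArray_eq_some_iff.1 (heq ▸ he)
  have hδ : δ₁ ≠ δ₂ := by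
    rintro rfl
    have hb : b₂ = b₁ := by simpa using congrFun hupd δ₁
    have hf : f₂ = f₁ := hC.eq_of_forall_ne_eq h₂ h₁ (i := δ₁) fun j hj ↦ by
      simpa [update_of_ne hj] using congrFun hupd j
    exact hne (by rw [hb, hf])
  have hf₂ : f₂ δ₁ = b₁ := by simpa [hδ] using congrFun hupd δ₁
  have hf₁ : f₁ δ₂ = b₂ := by simpa [hδ.symm] using (congrFun hupd δ₂).symm
  refine ⟨fun h ↦ hb₁ (h ▸ hf₂), fun h ↦ hδ (congrArg Prod.fst h), ?_, ?_⟩ <;> simpa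

end IsUniquelyCompletable

end UpdateArray

section ZeroSum

variable {ι α : Type*} [Fintype ι] [DecidableEq ι] {G : Type*} [AddCommGroup G] [DecidableEq G]

def zeroSumCode (t : Finset α) (ψ : ι → α → G) : Finset (ι → α) :=
  {f ∈ Fintype.piFinset fun _ ↦ t | ∑ j, ψ j (f j) = 0}

theorem isUniquelyCompletable_zeroSumCode {t : Finset α} {ψ : ι → α → G}
    (hψ : ∀ j, Set.BijOn (ψ j) t Set.univ) : IsUniquelyCompletable t (zeroSumCode t ψ) := by
  refine ⟨fun f hf ↦ (mem_filter.1 hf).1, fun f hf i ↦ ?_⟩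
  have hsum : ∀ c, ∑ j, ψ j (update f i c j) = ψ i c + ∑ j ∈ univ \ {i}, ψ j (f j) := fun c ↦ by
    simp_rw [apply_update (fun j ↦ ψ j), sum_update_of_mem (mem_univ i)]
  have hmem : ∀ c ∈ t, update f i c ∈ zeroSumCode t ψ ↔ ψ i c = -∑ j ∈ univ \ {i}, ψ j (f j) :=
    fun c hc ↦ by
      rw [zeroSumCode, mem_filter, hsum, eq_neg_iff_add_eq_zero]
      exact and_iff_right (update_mem_piFinset hf i hc)
  obtain ⟨c, hc, hψc⟩ := (hψ i).surjOn (Set.mem_univ (-∑ j ∈ univ \ {i}, ψ j (f j)))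
  exact ⟨c, ⟨hc, (hmem c hc).2 hψc⟩, fun c' ⟨hc', h⟩ ↦
    (hψ i).injOn hc' hc (((hmem c' hc').1 h).trans hψc.symm)⟩

end ZeroSum

theorem natMod1_mem_Icc {q : ℕ} (hq : 0 < q) (b : ℕ) : natMod1 b q ∈ Icc 1 q := by
  unfold natMod1
  split_ifs with h
  · simpa using Nat.one_le_of_lt hq
  · have := Nat.mod_lt b hq
    simp only [mem_Icc]
    omega

theorem natCast_natMod1 (b q : ℕ) : (natMod1 b q : ZMod q) = b := by
  unfold natMod1
  split_ifs with h
  · rw [ZMod.natCast_self, eq_comm, ZMod.natCast_eq_zero_iff]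
    exact Nat.dvd_of_mod_eq_zero h
  · exact ZMod.natCast_mod b q

theorem injOn_natCast_Icc (q : ℕ) : Set.InjOn (Nat.cast : ℕ → ZMod q) (Icc 1 q) := by
  intro a ha b hb h
  rw [ZMod.natCast_eq_natCast_iff'] at h
  simp only [coe_Icc, Set.mem_Icc] at ha hb
  rcases ha.2.eq_or_lt with rfl | ha' <;> rcases hb.2.eq_or_lt with hb' | hb'
  · omega
  · rw [Nat.mod_self, Nat.mod_eq_of_lt hb'] at h; omega
  · rw [hb', Nat.mod_self, Nat.mod_eq_of_lt ha'] at h; omega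
  · rwa [Nat.mod_eq_of_lt ha', Nat.mod_eq_of_lt hb'] at h

theorem bijOn_natCast_Icc {q : ℕ} (hq : 0 < q) :
    Set.BijOn (Nat.cast : ℕ → ZMod q) (Icc 1 q) Set.univ :=
  ⟨Set.mapsTo_univ _ _, injOn_natCast_Icc q,
    fun x _ ↦ ⟨natMod1 x.val q, natMod1_mem_Icc hq _, by
      have : NeZero q := ⟨hq.ne'⟩
      rw [natCast_natMod1, ZMod.natCast_zmod_val]⟩⟩

theorem eq_natMod1_iff {b c q : ℕ} (hc : c ∈ Icc 1 q) : c = natMod1 b q ↔ (c : ZMod q) = b := by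
  refine ⟨fun h ↦ h ▸ natCast_natMod1 b q, fun h ↦ injOn_natCast_Icc q hc ?_ ?_⟩
  · exact natMod1_mem_Icc (by simp at hc; omega) b
  · rw [h, natCast_natMod1]

/-- The row condition `f_m ≡ f_1 + ⋯ + f_{m-1} (mod q)` as a zero-sum condition. -/
def lastCheck (q : ℕ) {m : ℕ} (l j : Fin m) (c : ℕ) : ZMod q := if j = l then -c else c

theorem bijOn_lastCheck {q : ℕ} (hq : 0 < q) {m : ℕ} (l j : Fin m) :
    Set.BijOn (lastCheck q l j) (Icc 1 q) Set.univ := by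
  unfold lastCheck
  split_ifs
  · exact (neg_bijective.bijOn_univ).comp (bijOn_natCast_Icc hq)
  · exact bijOn_natCast_Icc hq

theorem mem_zeroSumCode_lastCheck_iff {m q : ℕ} (hm : 0 < m) (f : Fin m → ℕ) :
    f ∈ zeroSumCode (Icc 1 q) (lastCheck q ⟨m - 1, by omega⟩) ↔
      (∀ i, f i ∈ Icc 1 q) ∧ f ⟨m - 1, by omega⟩ =
        natMod1 (∑ i ∈ univ.filter (fun i : Fin m ↦ (i : ℕ) < m - 1), f i) q := by
  set l : Fin m := ⟨m - 1, by omega⟩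
  have hfilter : univ.filter (fun i : Fin m ↦ (i : ℕ) < m - 1) = univ.erase l := by
    ext i
    simp [l, Fin.ext_iff]
    omega
  have hsum :
      ∑ j, lastCheck q l j (f j) = -(f l : ZMod q) + ∑ j ∈ univ.erase l, (f j : ZMod q) := by
    rw [← add_sum_erase _ _ (mem_univ l)]
    simp only [lastCheck]
    congr 1
    exact sum_congr rfl fun j hj ↦ if_neg (ne_of_mem_erase hj)
  rw [zeroSumCode, mem_filter, Fintype.mem_piFinset, hfilter, hsum, neg_add_eq_zero]
  exact and_congr_right fun hf ↦ by rw [eq_natMod1_iff (hf l), Nat.cast_sum]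

/-- for integers `m ≥ 2` and `q ≥ 2`, the array `P` of Construction 1
(rows: vectors `f ∈ {1,…,q}^m` with `f_m = Mod(f_1+…+f_{m−1}, q)`; columns: pairs
`(δ,b)` with `δ ∈ {1,…,m}`, `b ∈ {1,…,q}`; entry `*` if `f_δ = b` and otherwise the
label `e` with `e_δ = b`, `e_i = f_i` for `i ≠ δ`) is an
`(mq, q^{m−1}, q^{m−2}, (q−1)q^{m−1})` PDA; moreover every row of `P` contains exactly
`m` stars, and for every row `f` and every `δ` there is exactly one star among the `q`
entries in the columns `(δ,1),…,(δ,q)`. -/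
theorem stmt_13 (m q : ℕ) (hm : 2 ≤ m) (hq : 2 ≤ q)
    -- rows of P
    (Row : (Fin m → ℕ) → Prop)
    (hRow : ∀ f, Row f ↔ ((∀ i, f i ∈ Finset.Icc 1 q) ∧
      f ⟨m - 1, by omega⟩
        = natMod1 (∑ i ∈ Finset.univ.filter (fun i : Fin m => (i : ℕ) < m - 1), f i) q))
    -- the (q−1)q^{m−1} integer labels of P
    (Lab : (Fin m → ℕ) → Prop)
    (hLab : ∀ e, Lab e ↔ ((∀ i, e i ∈ Finset.Icc 1 q) ∧
      e ⟨m - 1, by omega⟩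
        ≠ natMod1 (∑ i ∈ Finset.univ.filter (fun i : Fin m => (i : ℕ) < m - 1), e i) q))
    -- the array P itself (star = none)
    (P : (Fin m → ℕ) → Fin m → ℕ → Option (Fin m → ℕ))
    (hP : ∀ f (δ : Fin m) (b : ℕ),
      P f δ b = if f δ = b then none else some (Function.update f δ b)) :
    -- F = q^{m−1}: the number of rows
    Nat.card {f : Fin m → ℕ // Row f} = q ^ (m - 1) ∧
    -- C1: each column (δ,b) contains exactly Z = q^{m−2} stars
    (∀ δ : Fin m, ∀ b ∈ Finset.Icc 1 q,
      Nat.card {f : Fin m → ℕ // Row f ∧ P f δ b = none} = q ^ (m - 2)) ∧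
    -- S = (q−1)q^{m−1}: the number of labels
    Nat.card {e : Fin m → ℕ // Lab e} = (q - 1) * q ^ (m - 1) ∧
    -- non-star entries are labels
    (∀ f, Row f → ∀ δ : Fin m, ∀ b ∈ Finset.Icc 1 q, ∀ e,
      P f δ b = some e → Lab e) ∧
    -- C2: each label occurs at least once
    (∀ e, Lab e → ∃ f, Row f ∧ ∃ δ : Fin m, ∃ b ∈ Finset.Icc 1 q, P f δ b = some e) ∧
    -- C3
    (∀ f1 f2, Row f1 → Row f2 → ∀ δ1 δ2 : Fin m,
      ∀ b1 ∈ Finset.Icc 1 q, ∀ b2 ∈ Finset.Icc 1 q,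
      (f1, δ1, b1) ≠ (f2, δ2, b2) → P f1 δ1 b1 = P f2 δ2 b2 → P f1 δ1 b1 ≠ none →
      f1 ≠ f2 ∧ (δ1, b1) ≠ (δ2, b2) ∧ P f1 δ2 b2 = none ∧ P f2 δ1 b1 = none) ∧
    -- every row contains exactly m stars
    (∀ f, Row f →
      (((Finset.univ : Finset (Fin m)) ×ˢ Finset.Icc 1 q).filter
        (fun p => P f p.1 p.2 = none)).card = m) ∧
    -- exactly one star among the columns (δ,1),…,(δ,q)
    (∀ f, Row f → ∀ δ : Fin m,
      ((Finset.Icc 1 q).filter (fun b => P f δ b = none)).card = 1) := by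
  have hm₀ : 0 < m := by omega
  set C := zeroSumCode (Icc 1 q) (lastCheck q (⟨m - 1, by omega⟩ : Fin m))
  have hC : IsUniquelyCompletable (Icc 1 q) C :=
    isUniquelyCompletable_zeroSumCode (bijOn_lastCheck (by omega) _)
  obtain rfl : Row = (· ∈ C) :=
    funext fun f ↦ propext <| (hRow f).trans (mem_zeroSumCode_lastCheck_iff hm₀ f).symm
  obtain rfl : Lab = (· ∈ Fintype.piFinset (fun _ ↦ Icc 1 q) \ C) := funext fun e ↦ propext <| by
    rw [hLab, mem_sdiff, mem_zeroSumCode_lastCheck_iff hm₀, Fintype.mem_piFinset]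
    tauto
  obtain rfl : P = updateArray := funext fun f ↦ funext fun δ ↦ funext fun b ↦ hP f δ b
  have : Nonempty (Fin m) := ⟨⟨0, hm₀⟩⟩
  have h1 : (1 : ℕ) ∈ Icc 1 q := by simp; omega
  refine ⟨?_, fun δ b hb ↦ ?_, ?_, fun f hf δ b hb e ↦ hC.updateArray_mem_sdiff hf hb,
    fun e ↦ hC.exists_updateArray_eq_some,
    fun f₁ f₂ h₁ h₂ δ₁ δ₂ b₁ _ b₂ _ ↦ hC.updateArray_cross_eq_none h₁ h₂,
    fun f hf ↦ ?_, fun f hf δ ↦ ?_⟩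
  · simp [hC.card h1]
  · have hcol := hC.card_filter_apply_eq (by simpa using hm) δ hb
    simp only [Nat.card_Icc, add_tsub_cancel_right, Fintype.card_fin] at hcol
    rw [← hcol, ← Nat.card_eq_finsetCard]
    exact Nat.card_congr (Equiv.subtypeEquivRight fun f ↦ by simp)
  · rw [Nat.card_eq_finsetCard, card_sdiff_of_subset hC.subset, hC.card h1]
    simp only [Fintype.card_piFinset, prod_const, card_univ, Fintype.card_fin, Nat.card_Icc,
      add_tsub_cancel_right]
    rw [Nat.sub_one_mul, ← pow_succ', Nat.sub_add_cancel (by omega : 1 ≤ m)]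
  · simpa using card_filter_updateArray_eq_none (Fintype.mem_piFinset.1 (hC.subset hf))
  · exact card_filter_updateArray_apply_eq_none (Fintype.mem_piFinset.1 (hC.subset hf) δ)
end

section
/- Let K, t, L be positive integers with tL < K, and set K' = K − t(L−1), F = K·C(K',t) and S_tot = K·C(K',t+1). Then there exist an F × K array C with entries in {*, null} and an F × K array Q with entries in {*} ∪ {1,…,S_tot} such that: (i) every column of C contains exactly t·C(K',t) stars (so the fraction of stars per column is t/K); (ii) every row of C contains exactly t stars, and any two distinct star columns k < k' in the same row of C satisfy L ≤ k' − k ≤ K − L; (iii) Q(j,k) = * if and only if C(j, Mod(k+l, K)) = * for some l ∈ {0,1,…,L−1}; (iv) every integer in {1,…,S_tot} occurs at least once in Q, and whenever two distinct entries of Q are equal to the same integer they lie in distinct rows and distinct columns and the two cross positions are stars. In particular S_tot/F = (K − tL)/(t + 1). -/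
namespace S16
open Finset

variable {K' : ℕ}

def pcnt (T : Finset (Fin K')) (y : Fin K') : ℕ :=
  (T.filter (fun τ => τ.val < y.val)).card

def pos (L : ℕ) (T : Finset (Fin K')) (y : Fin K') : ℕ :=
  (y : ℕ) + pcnt T y * (L - 1)

lemma pcnt_mono (T : Finset (Fin K')) {y y' : Fin K'} (h : y.val ≤ y'.val) :
    pcnt T y ≤ pcnt T y' := by
  apply card_le_card
  intro x hx
  simp only [mem_filter] at hx ⊢
  exact ⟨hx.1, lt_of_lt_of_le hx.2 h⟩

lemma pcnt_le (T : Finset (Fin K')) (y : Fin K') : pcnt T y ≤ T.card :=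
  card_le_card (filter_subset _ _)

lemma pcnt_lt {T : Finset (Fin K')} {τ y : Fin K'} (hτ : τ ∈ T) (h : τ.val < y.val) :
    pcnt T τ < pcnt T y := by
  have hsub : insert τ (T.filter (fun σ => σ.val < τ.val)) ⊆ T.filter (fun σ => σ.val < y.val) := by
    intro x hx
    rcases mem_insert.mp hx with rfl | hx
    · exact mem_filter.mpr ⟨hτ, h⟩
    · rcases mem_filter.mp hx with ⟨h1, h2⟩
      exact mem_filter.mpr ⟨h1, h2.trans h⟩
  have hni : τ ∉ T.filter (fun σ => σ.val < τ.val) := by simp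
  have := card_le_card hsub
  rw [card_insert_of_notMem hni] at this
  unfold pcnt
  omega

lemma pcnt_mem_le {T : Finset (Fin K')} {τ : Fin K'} (hτ : τ ∈ T) :
    pcnt T τ + 1 ≤ T.card := by
  have hsub : T.filter (fun σ => σ.val < τ.val) ⊆ T.erase τ := by
    intro x hx
    rcases mem_filter.mp hx with ⟨h1, h2⟩
    exact mem_erase.mpr ⟨by intro h; subst h; omega, h1⟩
  have := card_le_card hsub
  rw [card_erase_of_mem hτ] at this
  have : 1 ≤ T.card := card_pos.mpr ⟨τ, hτ⟩
  have := card_le_card hsub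
  rw [card_erase_of_mem hτ] at this
  unfold pcnt
  omega

lemma pos_lt_pos {L : ℕ} {T : Finset (Fin K')} {y y' : Fin K'} (h : y.val < y'.val) :
    pos L T y < pos L T y' := by
  have := pcnt_mono T (le_of_lt h)
  unfold pos
  have := Nat.mul_le_mul_right (L-1) this
  omega

lemma pos_inj {L : ℕ} {T : Finset (Fin K')} {y y' : Fin K'} (h : pos L T y = pos L T y') :
    y = y' := by
  rcases lt_trichotomy (y:ℕ) (y':ℕ) with hlt | heq | hlt
  · exact absurd h (by have := pos_lt_pos (L := L) (T := T) hlt; omega)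
  · exact Fin.ext heq
  · exact absurd h (by have := pos_lt_pos (L := L) (T := T) hlt; omega)

lemma pos_add_L {L : ℕ} (hL : 1 ≤ L) {T : Finset (Fin K')} {τ y : Fin K'}
    (hτ : τ ∈ T) (h : τ.val < y.val) : pos L T τ + L ≤ pos L T y := by
  have h1 := pcnt_lt hτ h
  unfold pos
  have : (pcnt T τ + 1) * (L-1) ≤ pcnt T y * (L-1) := Nat.mul_le_mul_right _ h1
  have h2 : pcnt T τ * (L-1) + (L-1) ≤ pcnt T y * (L-1) := by
    calc pcnt T τ * (L-1) + (L-1) = (pcnt T τ + 1) * (L-1) := by ring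
    _ ≤ _ := this
  omega

lemma pos_lt {L t : ℕ} {T : Finset (Fin K')} (hT : T.card = t) (y : Fin K') :
    pos L T y < K' + t * (L - 1) := by
  have h1 := pcnt_le T y
  have h2 : (y:ℕ) < K' := y.isLt
  unfold pos
  have : pcnt T y * (L-1) ≤ t * (L-1) := Nat.mul_le_mul_right _ (by omega)
  omega

lemma pos_mem_add_L_le {L t : ℕ} (hL : 1 ≤ L) {T : Finset (Fin K')} (hT : T.card = t)
    {τ : Fin K'} (hτ : τ ∈ T) : pos L T τ + L ≤ K' + t * (L - 1) := by
  have h1 := pcnt_mem_le hτ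
  have h2 : (τ:ℕ) < K' := τ.isLt
  unfold pos
  have : (pcnt T τ + 1) * (L-1) ≤ t * (L-1) := Nat.mul_le_mul_right _ (by omega)
  have h3 : pcnt T τ * (L-1) + (L-1) ≤ t * (L-1) := by
    calc pcnt T τ * (L-1) + (L-1) = (pcnt T τ + 1) * (L-1) := by ring
    _ ≤ _ := this
  omega

end S16

namespace S16
open Finset

-- cast helpers
lemma cast_inj_of_lt {K a b : ℕ} [NeZero K] (ha : a < K) (hb : b < K)
    (h : (a : ZMod K) = b) : a = b := by
  have := congrArg ZMod.val h
  rwa [ZMod.val_natCast_of_lt ha, ZMod.val_natCast_of_lt hb] at this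

lemma cast_cases {K a b : ℕ} [NeZero K] (ha : a < 2 * K) (hb : b < K)
    (h : (a : ZMod K) = b) : a = b ∨ a = b + K := by
  have hmod : a % K = b := by
    have := congrArg ZMod.val h
    rwa [ZMod.val_natCast, ZMod.val_natCast_of_lt hb] at this
  rcases Nat.lt_or_ge a K with h1 | h1
  · left; rwa [Nat.mod_eq_of_lt h1] at hmod
  · right
    have h2 : a - K < K := by omega
    have : a % K = (a - K) % K := by
      conv_lhs => rw [show a = (a - K) + K by omega]
      simp [Nat.add_mod_right]
    rw [this, Nat.mod_eq_of_lt h2] at hmod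
    omega

lemma natMod1_mem {K : ℕ} (hK : 1 ≤ K) (b : ℕ) : natMod1 b K ∈ Finset.Icc 1 K := by
  unfold natMod1
  split
  · simp [hK]
  · have : b % K < K := Nat.mod_lt _ (by omega)
    simp only [Finset.mem_Icc]
    omega

lemma natMod1_cast {K : ℕ} [NeZero K] (b : ℕ) : ((natMod1 b K : ℕ) : ZMod K) = (b : ZMod K) := by
  unfold natMod1
  split
  next h =>
    rw [ZMod.natCast_self]
    symm
    rw [ZMod.natCast_eq_zero_iff]
    exact Nat.dvd_of_mod_eq_zero h
  next h =>
    rw [ZMod.natCast_eq_natCast_iff]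
    unfold Nat.ModEq
    simp

lemma cast_inj_Icc {K : ℕ} [NeZero K] {a b : ℕ} (ha : a ∈ Finset.Icc 1 K)
    (hb : b ∈ Finset.Icc 1 K) (h : (a : ZMod K) = b) : a = b := by
  simp only [Finset.mem_Icc] at ha hb
  have hmod : a % K = b % K := by rwa [ZMod.natCast_eq_natCast_iff] at h
  rcases Nat.lt_or_ge a K with h1 | h1 <;> rcases Nat.lt_or_ge b K with h2 | h2
  · rwa [Nat.mod_eq_of_lt h1, Nat.mod_eq_of_lt h2] at hmod
  · have hbK : b = K := by omega
    subst hbK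
    rw [Nat.mod_eq_of_lt h1, Nat.mod_self] at hmod
    omega
  · have haK : a = K := by omega
    subst haK
    rw [Nat.mod_self, Nat.mod_eq_of_lt h2] at hmod
    omega
  · omega

end S16

namespace S16
open Finset
open scoped Classical

variable {K' : ℕ}

def stars (K L : ℕ) (i : ZMod K) (T : Finset (Fin K')) : Finset (ZMod K) :=
  T.image (fun τ => i + ((pos L T τ : ℕ) : ZMod K))

-- LemA, nat level
lemma pos_ne_pos_add {L t K : ℕ} (hK : K = K' + t * (L - 1)) (hL : 1 ≤ L)
    {T : Finset (Fin K')} {y τ : Fin K'} (hy : y ∉ T) {l : ℕ} (hl : l < L)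
    (hτ : τ ∈ T) : pos L T y ≠ pos L T τ + l := by
  intro h
  rcases Nat.eq_zero_or_pos l with rfl | hl1
  · have hyt : y = τ := pos_inj (by omega : pos L T y = pos L T τ)
    rw [hyt] at hy
    exact hy hτ
  · have hlt : τ.val < y.val := by
      by_contra hc
      push_neg at hc
      rcases Nat.eq_or_lt_of_le hc with heq | hlt2
      · have hyt : y = τ := Fin.ext heq
        rw [hyt] at hy
        exact hy hτ
      · have h5 : pos L T y < pos L T τ := pos_lt_pos hlt2
        omega
    have h6 : pos L T τ + L ≤ pos L T y := pos_add_L hL hτ hlt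
    omega

-- the key cross lemma
lemma key_ne {L : ℕ} (hL : 1 ≤ L) {S : Finset (Fin K')} {y1 y2 : Fin K'}
    (h1 : y1 ∈ S) (h2 : y2 ∈ S) (hne : y1 ≠ y2) {y' : Fin K'}
    (hy' : y' ∉ S.erase y1) :
    pos L (S.erase y1) y' ≠ pos L (S.erase y2) y2 := by
  intro h
  have hy2T1 : y2 ∈ S.erase y1 := mem_erase.mpr ⟨Ne.symm hne, h2⟩
  rcases lt_trichotomy y1.val y2.val with hlt | heq | hlt
  · -- pcnt (erase y1) y2 = pcnt S y2 - 1; pcnt (erase y2) y2 = pcnt S y2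
    have hc1 : pcnt (S.erase y1) y2 + 1 = pcnt S y2 := by
      unfold pcnt
      rw [filter_erase, card_erase_of_mem]
      · have hmem : y1 ∈ S.filter (fun σ => σ.val < y2.val) := mem_filter.mpr ⟨h1, hlt⟩
        have : 1 ≤ (S.filter (fun σ => σ.val < y2.val)).card := card_pos.mpr ⟨y1, hmem⟩
        omega
      · exact mem_filter.mpr ⟨h1, hlt⟩
    have hc2 : pcnt (S.erase y2) y2 = pcnt S y2 := by
      unfold pcnt
      rw [filter_erase, erase_eq_of_notMem]
      simp
    have hpos : pos L (S.erase y2) y2 = pos L (S.erase y1) y2 + (L - 1) := by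
      unfold pos
      rw [hc2, ← hc1]
      ring
    rw [hpos] at h
    -- pos T1 y' = pos T1 y2 + (L-1) with y2 ∈ T1, y' ∉ T1
    have hy'ne : y' ≠ y2 := fun hc => hy' (hc ▸ hy2T1)
    rcases lt_trichotomy y'.val y2.val with hl2 | he2 | hl2
    · have h7 : pos L (S.erase y1) y' < pos L (S.erase y1) y2 := pos_lt_pos hl2
      omega
    · exact hy'ne (Fin.ext he2)
    · have h7 : pos L (S.erase y1) y2 + L ≤ pos L (S.erase y1) y' := pos_add_L hL hy2T1 hl2
      omega
  · exact hne (Fin.ext heq)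
  · -- y2 < y1 : pcnt (erase y1) y2 = pcnt S y2 = pcnt (erase y2) y2
    have hc1 : pcnt (S.erase y1) y2 = pcnt S y2 := by
      unfold pcnt
      rw [filter_erase, erase_eq_of_notMem]
      simp only [mem_filter, not_and]
      intro _
      omega
    have hc2 : pcnt (S.erase y2) y2 = pcnt S y2 := by
      unfold pcnt
      rw [filter_erase, erase_eq_of_notMem]
      simp
    have hpos : pos L (S.erase y2) y2 = pos L (S.erase y1) y2 := by
      unfold pos; rw [hc1, hc2]
    rw [hpos] at h
    have h8 := pos_inj h
    rw [h8] at hy'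
    exact hy' hy2T1

variable {K t L : ℕ} [NeZero K]

-- direction A: images of non-members are not covered
lemma not_covered (hK : K = K' + t * (L - 1)) (hL : 1 ≤ L) (ht1 : 1 ≤ t)
    {T : Finset (Fin K')} (hT : T.card = t) {i x : ZMod K} {y : Fin K'}
    (hy : y ∉ T) (hx : x + ((L - 1 : ℕ) : ZMod K) = i + ((pos L T y : ℕ) : ZMod K)) :
    ¬ ∃ l < L, x + (l : ZMod K) ∈ stars K L i T := by
  rintro ⟨l, hl, hmem⟩
  rcases mem_image.mp hmem with ⟨τ, hτ, heq⟩
  -- x + l = i + pos τ  and  x + (L-1) = i + pos y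
  have hzz : ((pos L T y + l : ℕ) : ZMod K) = ((pos L T τ + (L - 1) : ℕ) : ZMod K) := by
    push_cast
    linear_combination (-1 : ZMod K) * hx - heq
  have hLK : L ≤ K := by
    have h9 := y.isLt
    have h10 : L - 1 ≤ t * (L - 1) := Nat.le_mul_of_pos_left _ ht1
    omega
  have hb1 : pos L T y + l < 2 * K := by
    have := pos_lt (L := L) hT y
    omega
  have hb2 : pos L T τ + (L - 1) < K := by
    have := pos_mem_add_L_le (t := t) hL hT hτ
    omega
  rcases cast_cases hb1 hb2 hzz with hc | hc
  · have : pos L T y = pos L T τ + (L - 1 - l) := by omega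
    exact pos_ne_pos_add hK hL hy (by omega) hτ this
  · have h1 := pos_lt (L := L) hT y
    omega

-- direction B: uncovered points are images
lemma exists_y_of_not_covered (hK : K = K' + t * (L - 1)) (hL : 1 ≤ L) (ht : 1 ≤ t)
    (hLK : L ≤ K)
    {T : Finset (Fin K')} (hT : T.card = t) {i x : ZMod K}
    (hx : ¬ ∃ l < L, x + (l : ZMod K) ∈ stars K L i T) :
    ∃ y, y ∉ T ∧ x + ((L - 1 : ℕ) : ZMod K) = i + ((pos L T y : ℕ) : ZMod K) := by
  classical
  set cov : Finset (ZMod K) :=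
    T.biUnion (fun τ => (range L).image (fun l : ℕ => i + ((pos L T τ : ℕ) : ZMod K) - (l : ZMod K)))
    with hcov
  have hcard_window : ∀ τ ∈ T,
      ((range L).image (fun l : ℕ => i + ((pos L T τ : ℕ) : ZMod K) - (l : ZMod K))).card = L := by
    intro τ _
    rw [card_image_of_injOn, card_range]
    intro l hl l' hl' hee
    simp only [mem_range, mem_coe] at hl hl'
    have : (l : ZMod K) = (l' : ZMod K) := by linear_combination -hee
    exact cast_inj_of_lt (by omega) (by omega) this
  have hdisj : ∀ τ ∈ T, ∀ τ' ∈ T, τ ≠ τ' →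
      Disjoint ((range L).image (fun l : ℕ => i + ((pos L T τ : ℕ) : ZMod K) - (l : ZMod K)))
               ((range L).image (fun l : ℕ => i + ((pos L T τ' : ℕ) : ZMod K) - (l : ZMod K))) := by
    intro τ hτ τ' hτ' hne
    rw [disjoint_left]
    rintro a ha ha'
    rcases mem_image.mp ha with ⟨l, hl, rfl⟩
    rcases mem_image.mp ha' with ⟨l', hl', he⟩
    simp only [mem_range] at hl hl'
    have hzz : ((pos L T τ' + l : ℕ) : ZMod K) = ((pos L T τ + l' : ℕ) : ZMod K) := by
      push_cast
      linear_combination he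
    have hb1 : pos L T τ' + l < K := by
      have := pos_mem_add_L_le (t := t) hL hT hτ'
      omega
    have hb2 : pos L T τ + l' < K := by
      have := pos_mem_add_L_le (t := t) hL hT hτ
      omega
    have heq2 : pos L T τ' + l = pos L T τ + l' := cast_inj_of_lt hb1 hb2 hzz
    rcases lt_trichotomy τ.val τ'.val with hlt | heqv | hlt
    · have := pos_add_L hL hτ hlt
      omega
    · exact hne (Fin.ext heqv)
    · have := pos_add_L hL hτ' hlt
      omega
  have hcovcard : cov.card = t * L := by
    rw [hcov, card_biUnion hdisj]
    rw [Finset.sum_congr rfl hcard_window, sum_const, hT, smul_eq_mul]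
  -- the image of non-members
  set img : Finset (ZMod K) :=
    (univ.filter (fun y : Fin K' => y ∉ T)).image
      (fun y => i + ((pos L T y : ℕ) : ZMod K) - ((L - 1 : ℕ) : ZMod K)) with himg
  have hfc : univ.filter (fun y : Fin K' => y ∉ T) = Tᶜ := by
    ext a
    simp [Finset.mem_compl]
  have himgcard : img.card = K' - t := by
    rw [himg, card_image_of_injOn]
    · rw [hfc, Finset.card_compl, Fintype.card_fin, hT]
    · intro a ha b hb he
      have hzz : ((pos L T a : ℕ) : ZMod K) = ((pos L T b : ℕ) : ZMod K) := by
        linear_combination he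
      have h1 := pos_lt (L := L) hT a
      have h2 := pos_lt (L := L) hT b
      exact pos_inj (cast_inj_of_lt (by omega) (by omega) hzz)
  have hsub : img ⊆ univ \ cov := by
    intro a ha
    rcases mem_image.mp ha with ⟨y, hy, rfl⟩
    simp only [mem_filter, mem_univ, true_and] at hy
    rw [mem_sdiff]
    refine ⟨mem_univ _, ?_⟩
    intro hacov
    rcases mem_biUnion.mp hacov with ⟨τ, hτ, hmem⟩
    rcases mem_image.mp hmem with ⟨l, hl, he⟩
    simp only [mem_range] at hl
    have := not_covered (t := t) hK hL ht hT hy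
      (x := i + ((pos L T y : ℕ) : ZMod K) - ((L - 1 : ℕ) : ZMod K)) (by ring)
    exact this ⟨l, hl, mem_image.mpr ⟨τ, hτ, by linear_combination he⟩⟩
  have hcovsub : cov ⊆ univ := subset_univ _
  have hcards : (univ \ cov).card = K - t * L := by
    rw [card_sdiff_of_subset hcovsub, card_univ, ZMod.card, hcovcard]
  have hm1 : t * (L - 1) + t = t * L := by
    obtain ⟨n, hn⟩ : ∃ n, L = n + 1 := ⟨L - 1, by omega⟩
    subst hn
    simp [Nat.mul_succ]
  have hKtL : K - t * L = K' - t := by omega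
  have heq : img = univ \ cov := by
    apply eq_of_subset_of_card_le hsub
    rw [hcards, himgcard, hKtL]
  -- x is uncovered, hence in img
  have hxmem : x ∈ univ \ cov := by
    rw [mem_sdiff]
    refine ⟨mem_univ _, fun hc => hx ?_⟩
    rcases mem_biUnion.mp hc with ⟨τ, hτ, hmem⟩
    rcases mem_image.mp hmem with ⟨l, hl, he⟩
    simp only [mem_range] at hl
    exact ⟨l, hl, mem_image.mpr ⟨τ, hτ, by linear_combination he⟩⟩
  rw [← heq] at hxmem
  rcases mem_image.mp hxmem with ⟨y, hy, he⟩
  simp only [mem_filter, mem_univ, true_and] at hy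
  exact ⟨y, hy, by linear_combination -he⟩

end S16

namespace S16
open Finset
open scoped Classical

variable {K' K t L : ℕ} [NeZero K]

lemma pos_cast_inj (hK2 : K = K' + t * (L - 1)) {T : Finset (Fin K')} (hT : T.card = t)
    {y y' : Fin K'}
    (h : ((pos L T y : ℕ) : ZMod K) = ((pos L T y' : ℕ) : ZMod K)) : y = y' := by
  have h1 := pos_lt (L := L) hT y
  have h2 := pos_lt (L := L) hT y'
  exact pos_inj (cast_inj_of_lt (by omega) (by omega) h)

lemma stars_card (hK2 : K = K' + t * (L - 1)) {T : Finset (Fin K')} (hT : T.card = t)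
    (i : ZMod K) : (stars K L i T).card = t := by
  rw [stars, card_image_of_injOn, hT]
  intro a _ b _ he
  have : ((pos L T a : ℕ) : ZMod K) = ((pos L T b : ℕ) : ZMod K) := by
    linear_combination he
  exact pos_cast_inj hK2 hT this

lemma row_count (hK2 : K = K' + t * (L - 1)) (hK1 : 1 ≤ K)
    {T : Finset (Fin K')} (hT : T.card = t) (i : ZMod K) :
    (((Finset.Icc 1 K)).filter (fun k : ℕ => (k : ZMod K) ∈ stars K L i T)).card = t := by
  rw [← stars_card hK2 hT i]
  apply card_bij (fun k _ => ((k : ℕ) : ZMod K))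
  · intro a ha
    exact (mem_filter.mp ha).2
  · intro a ha b hb he
    exact cast_inj_Icc (mem_filter.mp ha).1 (mem_filter.mp hb).1 he
  · intro b hb
    refine ⟨natMod1 b.val K, mem_filter.mpr ⟨natMod1_mem hK1 _, ?_⟩, ?_⟩
    · rw [natMod1_cast, ZMod.natCast_rightInverse b]
      exact hb
    · rw [natMod1_cast, ZMod.natCast_rightInverse b]

lemma card_filter_equiv {α β : Type*} [Fintype α] [Fintype β] (e : α ≃ β) (p : β → Prop)
    [DecidablePred p] [DecidablePred fun a => p (e a)] :
    (univ.filter (fun a => p (e a))).card = (univ.filter p).card := by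
  apply card_bij (fun a _ => e a)
  · intro a ha
    exact mem_filter.mpr ⟨mem_univ _, (mem_filter.mp ha).2⟩
  · intro a _ b _ he
    exact e.injective he
  · intro b hb
    exact ⟨e.symm b, mem_filter.mpr ⟨mem_univ _, by simpa using (mem_filter.mp hb).2⟩,
      by simp⟩

lemma col_count (hK2 : K = K' + t * (L - 1)) (x : ZMod K) :
    (univ.filter (fun p : ZMod K × {T : Finset (Fin K') // T.card = t} =>
      x ∈ stars K L p.1 p.2.1)).card = K'.choose t * t := by
  rw [card_filter]
  rw [Fintype.sum_prod_type_right]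
  have hinner : ∀ T : {T : Finset (Fin K') // T.card = t},
      (∑ i : ZMod K, if x ∈ stars K L i T.1 then 1 else 0) = t := by
    intro T
    rw [← card_filter]
    have hset : (univ.filter (fun i : ZMod K => x ∈ stars K L i T.1))
        = T.1.image (fun τ => x - ((pos L T.1 τ : ℕ) : ZMod K)) := by
      ext i
      simp only [mem_filter, mem_univ, true_and, mem_image, stars]
      constructor
      · rintro ⟨τ, hτ, he⟩
        exact ⟨τ, hτ, by linear_combination -he⟩
      · rintro ⟨τ, hτ, he⟩
        exact ⟨τ, hτ, by linear_combination -he⟩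
    rw [hset, card_image_of_injOn, T.2]
    intro a ha b hb he
    have : ((pos L T.1 a : ℕ) : ZMod K) = ((pos L T.1 b : ℕ) : ZMod K) := by
      linear_combination -he
    exact pos_cast_inj hK2 T.2 this
  rw [Finset.sum_congr rfl (fun T _ => hinner T), sum_const, card_univ,
    Fintype.card_finset_len, Fintype.card_fin, smul_eq_mul]

end S16

open Finset S16 in
open scoped Classical in
/-- combinatorial content of Theorem 1: for positive integers
`K, t, L` with `tL < K`, setting `K' = K − t(L−1)`, `F = K·C(K',t)`,
`S_tot = K·C(K',t+1)`, there exist an `F × K` node-placement array `C`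
(`true` = star) and an `F × K` user-delivery array `Q` (star = `none`, integer
entries in `{1,…,S_tot}`) satisfying (i)–(iv); in particular
`S_tot/F = (K − tL)/(t+1)`. -/

theorem stmt_16 (K t L : ℕ) (hK : 1 ≤ K) (ht : 1 ≤ t) (hL : 1 ≤ L)
    (htL : t * L < K)
    (K' F S_tot : ℕ) (hK' : K' = K - t * (L - 1))
    (hF : F = K * K'.choose t) (hS : S_tot = K * K'.choose (t + 1)) :
    (∃ (C : Fin F → ℕ → Bool) (Q : Fin F → ℕ → Option ℕ),
      -- (i) every column of C contains exactly t·C(K',t) stars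
      (∀ k ∈ Finset.Icc 1 K,
        ((Finset.univ : Finset (Fin F)).filter (fun j => C j k = true)).card
          = t * K'.choose t) ∧
      -- (ii) every row of C contains exactly t stars, ...
      (∀ j : Fin F, ((Finset.Icc 1 K).filter (fun k => C j k = true)).card = t) ∧
      -- ... any two star columns in the same row being at distance L ≤ · ≤ K−L
      (∀ j : Fin F, ∀ k ∈ Finset.Icc 1 K, ∀ k' ∈ Finset.Icc 1 K,
        C j k = true → C j k' = true → k < k' → L ≤ k' - k ∧ k' - k ≤ K - L) ∧
      -- (iii) stars of Q: Q(j,k) = * iff C(j, Mod(k+l,K)) = * for some 0 ≤ l ≤ L−1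
      (∀ j : Fin F, ∀ k ∈ Finset.Icc 1 K,
        (Q j k = none ↔ ∃ l < L, C j (natMod1 (k + l) K) = true)) ∧
      -- (iv) integer entries of Q lie in {1,…,S_tot} ...
      (∀ j : Fin F, ∀ k ∈ Finset.Icc 1 K, ∀ s, Q j k = some s →
        s ∈ Finset.Icc 1 S_tot) ∧
      -- ... every integer of {1,…,S_tot} occurs at least once ...
      (∀ s ∈ Finset.Icc 1 S_tot, ∃ j : Fin F, ∃ k ∈ Finset.Icc 1 K,
        Q j k = some s) ∧
      -- ... and Q satisfies C3
      (∀ j1 j2 : Fin F, ∀ k1 ∈ Finset.Icc 1 K, ∀ k2 ∈ Finset.Icc 1 K,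
        (j1, k1) ≠ (j2, k2) → Q j1 k1 = Q j2 k2 → Q j1 k1 ≠ none →
        j1 ≠ j2 ∧ k1 ≠ k2 ∧ Q j1 k2 = none ∧ Q j2 k1 = none)) ∧
    -- in particular S_tot/F = (K − tL)/(t+1)
    (S_tot : ℚ) / (F : ℚ) = ((K : ℚ) - t * L) / (t + 1) := by
  haveI : NeZero K := ⟨by omega⟩
  have hm1 : t * (L - 1) + t = t * L := by
    obtain ⟨n, hn⟩ : ∃ n, L = n + 1 := ⟨L - 1, by omega⟩
    subst hn; simp [Nat.mul_succ]
  have hK2 : K = K' + t * (L - 1) := by omega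
  have htK' : t + 1 ≤ K' := by omega
  obtain ⟨eR⟩ : Nonempty (Fin F ≃ ZMod K × {T : Finset (Fin K') // T.card = t}) := by
    refine ⟨Fintype.equivOfCardEq ?_⟩
    simp [hF, ZMod.card, Fintype.card_finset_len]
  obtain ⟨eS⟩ : Nonempty ((ZMod K × {S : Finset (Fin K') // S.card = t + 1}) ≃ Fin S_tot) := by
    refine ⟨Fintype.equivOfCardEq ?_⟩
    simp [hS, ZMod.card, Fintype.card_finset_len]
  constructor
  · refine ⟨fun j k => decide (k ∈ Finset.Icc 1 K ∧
        ((k : ZMod K) ∈ stars K L (eR j).1 (eR j).2.1)),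
      fun j k =>
        if hk : k ∈ Finset.Icc 1 K then
          if h : ∃ y, y ∉ (eR j).2.1 ∧
              ((k : ZMod K) + ((L - 1 : ℕ) : ZMod K)
                = (eR j).1 + ((pos L (eR j).2.1 y : ℕ) : ZMod K)) then
            some ((eS ((eR j).1,
              ⟨insert h.choose (eR j).2.1, by
                rw [Finset.card_insert_of_notMem h.choose_spec.1, (eR j).2.2]⟩)).val + 1)
          else none
        else none,
      ?_, ?_, ?_, ?_, ?_, ?_, ?_⟩
    · -- (i) column count
      intro k hk
      have hcongr : (Finset.univ.filter (fun j : Fin F => decide (k ∈ Finset.Icc 1 K ∧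
          ((k : ZMod K) ∈ stars K L (eR j).1 (eR j).2.1)) = true))
          = Finset.univ.filter
              (fun j : Fin F => (k : ZMod K) ∈ stars K L (eR j).1 (eR j).2.1) := by
        apply Finset.filter_congr
        intro j _
        simp [hk]
      rw [hcongr]
      exact (card_filter_equiv eR
        (fun p : ZMod K × {T : Finset (Fin K') // T.card = t} =>
          (k : ZMod K) ∈ stars K L p.1 p.2.1)).trans
        (by rw [col_count hK2, Nat.mul_comm])
    · -- (ii) row count
      intro j
      have hcongr : ((Finset.Icc 1 K).filter (fun k : ℕ => decide (k ∈ Finset.Icc 1 K ∧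
          ((k : ZMod K) ∈ stars K L (eR j).1 (eR j).2.1)) = true))
          = ((Finset.Icc 1 K).filter
              (fun k : ℕ => (k : ZMod K) ∈ stars K L (eR j).1 (eR j).2.1)) := by
        apply Finset.filter_congr
        intro k hk
        simp [hk]
      rw [hcongr, row_count hK2 hK (eR j).2.2]
    · -- (ii') distances
      intro j k hk k' hk' hC hC' hlt
      simp only [decide_eq_true_eq] at hC hC'
      obtain ⟨τ, hτ, he⟩ := Finset.mem_image.mp hC.2
      obtain ⟨τ', hτ', he'⟩ := Finset.mem_image.mp hC'.2
      have hT : (eR j).2.1.card = t := (eR j).2.2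
      have hne : τ ≠ τ' := by
        rintro rfl
        have hkk : (k : ZMod K) = (k' : ZMod K) := he.symm.trans he'
        have := cast_inj_Icc hk hk' hkk
        omega
      have hcast : ((k' - k : ℕ) : ZMod K)
          = ((pos L (eR j).2.1 τ' : ℕ) : ZMod K) - ((pos L (eR j).2.1 τ : ℕ) : ZMod K) := by
        have h9 : ((k' - k : ℕ) : ZMod K) = (k' : ZMod K) - (k : ZMod K) := by
          push_cast [Nat.cast_sub hlt.le]
          ring
        rw [h9, ← he, ← he']
        ring
      simp only [Finset.mem_Icc] at hk hk'
      rcases lt_trichotomy (pos L (eR j).2.1 τ) (pos L (eR j).2.1 τ') with hp | hp | hp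
      · have hvlt : τ.val < τ'.val := by
          by_contra hc
          push_neg at hc
          rcases Nat.eq_or_lt_of_le hc with heq2 | hlt2
          · exact hne (Fin.ext heq2.symm)
          · have := pos_lt_pos (L := L) (T := (eR j).2.1) hlt2
            omega
        have hgap := pos_add_L hL hτ hvlt
        have hub := pos_mem_add_L_le (t := t) hL hT hτ'
        have hD : ((k' - k : ℕ) : ZMod K)
            = ((pos L (eR j).2.1 τ' - pos L (eR j).2.1 τ : ℕ) : ZMod K) := by
          rw [hcast, Nat.cast_sub hp.le]
        have := cast_inj_of_lt (a := k' - k) (by omega) (by omega) hD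
        omega
      · exact absurd (pos_inj hp) hne
      · have hvlt : τ'.val < τ.val := by
          by_contra hc
          push_neg at hc
          rcases Nat.eq_or_lt_of_le hc with heq2 | hlt2
          · exact hne (Fin.ext heq2)
          · have := pos_lt_pos (L := L) (T := (eR j).2.1) hlt2
            omega
        have hgap := pos_add_L hL hτ' hvlt
        have hub := pos_mem_add_L_le (t := t) hL hT hτ
        have hD : ((k' - k : ℕ) : ZMod K)
            = ((K - (pos L (eR j).2.1 τ - pos L (eR j).2.1 τ') : ℕ) : ZMod K) := by
          rw [hcast,
            Nat.cast_sub (show pos L (eR j).2.1 τ - pos L (eR j).2.1 τ' ≤ K by omega),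
            Nat.cast_sub hp.le, ZMod.natCast_self]
          ring
        have := cast_inj_of_lt (a := k' - k) (by omega) (by omega) hD
        omega
    · -- (iii)
      intro j k hk
      have hcov_iff : ∀ l : ℕ,
          (decide (natMod1 (k + l) K ∈ Finset.Icc 1 K ∧
            ((natMod1 (k + l) K : ZMod K) ∈ stars K L (eR j).1 (eR j).2.1)) = true)
          ↔ ((k : ZMod K) + (l : ZMod K) ∈ stars K L (eR j).1 (eR j).2.1) := by
        intro l
        rw [decide_eq_true_eq]
        rw [natMod1_cast]
        push_cast
        simp [natMod1_mem hK]
      simp only [dif_pos hk]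
      by_cases h : ∃ y, y ∉ (eR j).2.1 ∧
          ((k : ZMod K) + ((L - 1 : ℕ) : ZMod K)
            = (eR j).1 + ((pos L (eR j).2.1 y : ℕ) : ZMod K))
      · rw [dif_pos h]
        simp only [reduceCtorEq, false_iff]
        rintro ⟨l, hl, hC⟩
        rw [hcov_iff l] at hC
        exact not_covered hK2 hL ht (eR j).2.2 h.choose_spec.1 h.choose_spec.2
          ⟨l, hl, hC⟩
      · rw [dif_neg h]
        simp only [true_iff]
        by_contra hno
        push_neg at hno
        apply h
        apply exists_y_of_not_covered hK2 hL ht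
          (by have := Nat.le_mul_of_pos_left L ht; omega) (eR j).2.2
        rintro ⟨l, hl, hmem⟩
        exact absurd ((hcov_iff l).mpr hmem) (by simpa using hno l hl)
    · -- (v) range of symbols
      intro j k hk s hQ
      simp only [dif_pos hk] at hQ
      by_cases h : ∃ y, y ∉ (eR j).2.1 ∧
          ((k : ZMod K) + ((L - 1 : ℕ) : ZMod K)
            = (eR j).1 + ((pos L (eR j).2.1 y : ℕ) : ZMod K))
      · rw [dif_pos h] at hQ
        have hs := Option.some_injective _ hQ
        have hlt := (eS ((eR j).1, ⟨insert h.choose (eR j).2.1, by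
          rw [Finset.card_insert_of_notMem h.choose_spec.1, (eR j).2.2]⟩)).isLt
        simp only [Finset.mem_Icc]
        omega
      · rw [dif_neg h] at hQ
        exact absurd hQ (by simp)
    · -- (vi) surjectivity
      intro s hs
      simp only [Finset.mem_Icc] at hs
      obtain ⟨⟨i, S, hScard⟩, hsa⟩ : ∃ a, eS a = ⟨s - 1, by omega⟩ :=
        ⟨eS.symm ⟨s - 1, by omega⟩, eS.apply_symm_apply _⟩
      have hSne : S.Nonempty := Finset.card_pos.mp (by omega)
      obtain ⟨y, hyS⟩ := hSne
      have hTc : (S.erase y).card = t := by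
        rw [Finset.card_erase_of_mem hyS, hScard]
        omega
      set j : Fin F := eR.symm (i, ⟨S.erase y, hTc⟩) with hj
      have hRj : eR j = (i, ⟨S.erase y, hTc⟩) := eR.apply_symm_apply _
      set x : ZMod K := i + ((pos L (S.erase y) y : ℕ) : ZMod K) - ((L - 1 : ℕ) : ZMod K)
        with hx
      refine ⟨j, natMod1 x.val K, natMod1_mem hK _, ?_⟩
      have hkx : ((natMod1 x.val K : ℕ) : ZMod K) = x := by
        rw [natMod1_cast, ZMod.natCast_rightInverse x]
      have hP : ∃ y', y' ∉ (eR j).2.1 ∧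
          (((natMod1 x.val K : ℕ) : ZMod K) + ((L - 1 : ℕ) : ZMod K)
            = (eR j).1 + ((pos L (eR j).2.1 y' : ℕ) : ZMod K)) := by
        refine ⟨y, ?_, ?_⟩
        · rw [hRj]; exact Finset.notMem_erase _ _
        · rw [hkx, hRj, hx]; ring
      simp only [dif_pos (natMod1_mem hK x.val), dif_pos hP]
      have hP2 : ((natMod1 x.val K : ℕ) : ZMod K) + ((L - 1 : ℕ) : ZMod K)
          = (eR j).1 + ((pos L (eR j).2.1 y : ℕ) : ZMod K) := by
        rw [hRj, hkx, hx]
        ring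
      have hyc : hP.choose = y := by
        have hcc : ((pos L (eR j).2.1 hP.choose : ℕ) : ZMod K)
            = ((pos L (eR j).2.1 y : ℕ) : ZMod K) := by
          linear_combination -hP.choose_spec.2 + hP2
        exact pos_cast_inj hK2 (eR j).2.2 hcc
      have pf2 : (insert hP.choose (eR j).2.1).card = t + 1 := by
        rw [Finset.card_insert_of_notMem hP.choose_spec.1, (eR j).2.2]
      have hpair : ((eR j).1, (⟨insert hP.choose (eR j).2.1, pf2⟩ :
            {S' : Finset (Fin K') // S'.card = t + 1})) = (i, ⟨S, hScard⟩) := by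
        refine Prod.ext ?_ (Subtype.ext ?_)
        · show (eR j).1 = i
          rw [hRj]
        · show insert hP.choose (eR j).2.1 = S
          rw [hyc, show (eR j).2.1 = S.erase y from by rw [hRj]]
          exact Finset.insert_erase hyS
      have hval : (eS ((eR j).1, ⟨insert hP.choose (eR j).2.1, pf2⟩)).val + 1 = s := by
        rw [hpair, hsa]
        show s - 1 + 1 = s
        omega
      exact congrArg some hval
    · -- (vii) C3
      intro j1 j2 k1 hk1 k2 hk2 hpair hQeq hQne
      simp only [dif_pos hk1, dif_pos hk2] at hQeq hQne ⊢
      by_cases h1 : ∃ y, y ∉ (eR j1).2.1 ∧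
          ((k1 : ZMod K) + ((L - 1 : ℕ) : ZMod K)
            = (eR j1).1 + ((pos L (eR j1).2.1 y : ℕ) : ZMod K))
      swap
      · rw [dif_neg h1] at hQne; exact absurd rfl hQne
      by_cases h2 : ∃ y, y ∉ (eR j2).2.1 ∧
          ((k2 : ZMod K) + ((L - 1 : ℕ) : ZMod K)
            = (eR j2).1 + ((pos L (eR j2).2.1 y : ℕ) : ZMod K))
      swap
      · rw [dif_pos h1, dif_neg h2] at hQeq
        exact absurd hQeq (by simp)
      rw [dif_pos h1, dif_pos h2] at hQeq
      have hEq := eS.injective (Fin.ext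
        (Nat.add_right_cancel (Option.some_injective _ hQeq)))
      have hi12 := congrArg Prod.fst hEq
      have hS12 := congrArg (fun p : ZMod K × {S : Finset (Fin K') // S.card = t + 1}
        => p.2.1) hEq
      simp only at hi12 hS12
      have hy1 := h1.choose_spec.1
      have hx1 := h1.choose_spec.2
      have hy2 := h2.choose_spec.1
      have hx2 := h2.choose_spec.2
      have hT1card : (eR j1).2.1.card = t := (eR j1).2.2
      have hT2card : (eR j2).2.1.card = t := (eR j2).2.2
      have hT1e : (eR j1).2.1 = (insert h1.choose (eR j1).2.1).erase h1.choose :=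
        (Finset.erase_insert hy1).symm
      have hT2e : (eR j2).2.1 = (insert h1.choose (eR j1).2.1).erase h2.choose := by
        rw [hS12]
        exact (Finset.erase_insert hy2).symm
      have hy1S : h1.choose ∈ insert h1.choose (eR j1).2.1 := Finset.mem_insert_self _ _
      have hy2S : h2.choose ∈ insert h1.choose (eR j1).2.1 := by
        rw [hS12]
        exact Finset.mem_insert_self _ _
      have hposb : ∀ (T : Finset (Fin K')), T.card = t → ∀ y : Fin K', pos L T y < K := by
        intro T hT y
        have := pos_lt (L := L) hT y
        omega
      by_cases hyy : h1.choose = h2.choose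
      · exfalso
        have hTT12 : (eR j1).2.1 = (eR j2).2.1 := by rw [hT1e, hT2e, hyy]
        have hTT : (eR j1).2 = (eR j2).2 := Subtype.ext hTT12
        have hj : j1 = j2 := eR.injective (Prod.ext hi12 hTT)
        have hposeq : pos L (eR j1).2.1 h1.choose = pos L (eR j2).2.1 h2.choose := by
          rw [hyy, hTT12]
        have hcc : ((pos L (eR j1).2.1 h1.choose : ℕ) : ZMod K)
            = ((pos L (eR j2).2.1 h2.choose : ℕ) : ZMod K) := by rw [hposeq]
        have hk12 : (k1 : ZMod K) = (k2 : ZMod K) := by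
          linear_combination hx1 - hx2 + hi12 + hcc
        exact hpair (Prod.ext hj (cast_inj_Icc hk1 hk2 hk12))
      · have hy2T1 : h2.choose ∈ (eR j1).2.1 := by
          rcases Finset.mem_insert.mp hy2S with hc | hc
          · exact absurd hc.symm hyy
          · exact hc
        have hTne : j1 ≠ j2 := by
          intro hj
          have hTT12 : (eR j1).2.1 = (eR j2).2.1 := by rw [hj]
          rw [hTT12] at hy2T1
          exact hy2 hy2T1
        have hposne : ∀ y' : Fin K', y' ∉ (eR j1).2.1 →
            ((pos L (eR j1).2.1 y' : ℕ) : ZMod K)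
              ≠ ((pos L (eR j2).2.1 h2.choose : ℕ) : ZMod K) := by
          intro y' hy' hc
          have hnat : pos L (eR j1).2.1 y' = pos L (eR j2).2.1 h2.choose :=
            cast_inj_of_lt (by have := hposb _ hT1card y'; omega)
              (hposb _ hT2card _) hc
          rw [hT1e] at hy'
          have := key_ne hL hy1S hy2S hyy (y' := y') hy'
          rw [← hT1e, ← hT2e] at this
          exact this hnat
        have hposne' : ∀ y' : Fin K', y' ∉ (eR j2).2.1 →
            ((pos L (eR j2).2.1 y' : ℕ) : ZMod K)
              ≠ ((pos L (eR j1).2.1 h1.choose : ℕ) : ZMod K) := by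
          intro y' hy' hc
          have hnat : pos L (eR j2).2.1 y' = pos L (eR j1).2.1 h1.choose :=
            cast_inj_of_lt (by have := hposb _ hT2card y'; omega)
              (hposb _ hT1card _) hc
          rw [hT2e] at hy'
          have := key_ne hL hy2S hy1S (Ne.symm hyy) (y' := y') hy'
          rw [← hT1e, ← hT2e] at this
          exact this hnat
        refine ⟨hTne, ?_, ?_, ?_⟩
        · intro hkk
          apply hposne h1.choose hy1
          have hcast : ((k1 : ℕ) : ZMod K) = ((k2 : ℕ) : ZMod K) := by rw [hkk]
          linear_combination -hx1 + hx2 + hcast - hi12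
        · rw [dif_neg]
          rintro ⟨y', hy', hx'⟩
          apply hposne y' hy'
          linear_combination -hx' + hx2 - hi12
        · rw [dif_neg]
          rintro ⟨y', hy', hx'⟩
          apply hposne' y' hy'
          linear_combination -hx' + hx1 + hi12
  · -- rational identity
    have hchoose := Nat.choose_succ_right_eq K' t
    have hKtL : K' - t = K - t * L := by omega
    have hmain : S_tot * (t + 1) = F * (K - t * L) := by
      rw [hS, hF, mul_assoc, mul_assoc, hchoose, hKtL]
    have hF0 : (F : ℚ) ≠ 0 := by
      have : 0 < K'.choose t := Nat.choose_pos (by omega)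
      have : 0 < F := by rw [hF]; positivity
      exact_mod_cast this.ne'
    have ht10 : ((t : ℚ) + 1) ≠ 0 := by positivity
    rw [div_eq_div_iff hF0 ht10]
    have h0 : ((S_tot * (t + 1) : ℕ) : ℚ) = ((F * (K - t * L) : ℕ) : ℚ) := by
      rw [hmain]
    push_cast [Nat.cast_sub htL.le] at h0
    push_cast
    linear_combination h0
end
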